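/- arXiv:1412.1862 — 7 statements merged into one kernel-verified Lean document; each statement's English description precedes it below -/
import Mathlib

section
/- In the theory RBB, the principle of reason consistency is derivable: ⊢ (Br ∧ Bs) → (r:φ → ¬(s:¬φ)) for all reasons r, s and formulas φ. -/
/-! By (RB), `r:φ` and `Br` give `Bφ`, and `s:¬φ` and `Bs` give `B¬φ`; axiom (D) forbids
having both. Everything else is propositional glue. -/

/-- Formulas of the logic of reason-based belief: propositional letters from `P`,
negation, disjunction, `supports r φ` (i.e. `r:φ`), `adeq r` (i.e. the formula `r`,
"r is an adequate reason"), and belief `bel φ` (i.e. `Bφ`). -/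
inductive Form (P R : Type) : Type
  | atom : P → Form P R
  | neg : Form P R → Form P R
  | disj : Form P R → Form P R → Form P R
  | supports : R → Form P R → Form P R
  | adeq : R → Form P R
  | bel : Form P R → Form P R

namespace Form
variable {P R : Type}
/-- Material implication, defined classically. -/
def impl (φ ψ : Form P R) : Form P R := disj (neg φ) ψ
/-- Conjunction, defined classically. -/
def conj (φ ψ : Form P R) : Form P R := neg (disj (neg φ) (neg ψ))
/-- Biconditional. -/
def iffF (φ ψ : Form P R) : Form P R := conj (impl φ ψ) (impl ψ φ)
end Form

/-- `φ` is an instance of a classical propositional tautology: every Boolean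
valuation respecting negation and disjunction makes it true. -/
def Taut {P R : Type} (φ : Form P R) : Prop :=
  ∀ v : Form P R → Bool,
    (∀ ψ, v ψ.neg = !v ψ) →
    (∀ ψ χ, v (ψ.disj χ) = (v ψ || v χ)) →
    v φ = true

/-- Derivability in the theory RBB. -/
inductive Prov {P R : Type} : Form P R → Prop
  | taut {φ : Form P R} : Taut φ → Prov φ
  | rk (r : R) (φ ψ : Form P R) :
      Prov ((Form.supports r (φ.impl ψ)).impl ((Form.supports r φ).impl (Form.supports r ψ)))
  | a (r : R) (φ : Form P R) :
      Prov ((Form.supports r φ).impl ((Form.adeq r).impl φ))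
  | rb (r : R) (φ : Form P R) :
      Prov ((Form.supports r φ).impl ((Form.bel (Form.adeq r)).impl (Form.bel φ)))
  | d (φ : Form P R) : Prov ((Form.bel φ).impl (Form.bel φ.neg).neg)
  | mp {φ ψ : Form P R} : Prov (φ.impl ψ) → Prov φ → Prov ψ
  | rn (r : R) {φ : Form P R} : Prov φ → Prov (Form.supports r φ)
  | e {φ ψ : Form P R} : Prov (φ.iffF ψ) → Prov ((Form.bel φ).iffF (Form.bel ψ))

theorem taut_exclusive_of_clashing_conclusions {P R : Type} (a b c d e f : Form P R) :
    Taut ((a.impl (b.impl c)).impl ((d.impl (e.impl f)).impl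
      ((c.impl f.neg).impl ((b.conj e).impl (a.impl d.neg))))) := by
  intro v hneg hdisj
  simp only [Form.impl, Form.conj, hneg, hdisj]
  cases v a <;> cases v b <;> cases v c <;> cases v d <;> cases v e <;> cases v f <;> rfl

/-- reason consistency (RC) is derivable in RBB:
⊢ (Br ∧ Bs) → (r:φ → ¬(s:¬φ)). -/
theorem rbb_reason_consistency {P R : Type} (r s : R) (φ : Form P R) :
    Prov (((Form.bel (Form.adeq r)).conj (Form.bel (Form.adeq s))).impl
      ((Form.supports r φ).impl (Form.supports s φ.neg).neg)) :=
  have glue := Prov.taut (taut_exclusive_of_clashing_conclusions (Form.supports r φ)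
    (Form.bel (Form.adeq r)) (Form.bel φ) (Form.supports s φ.neg) (Form.bel (Form.adeq s))
    (Form.bel φ.neg))
  Prov.mp (Prov.mp (Prov.mp glue (Prov.rb r φ)) (Prov.rb s φ.neg)) (Prov.d φ)
end

section
/- In RBB, internal consistency of accepted reasons is derivable: ⊢ Br → (r:φ → ¬(r:¬φ)). -/
theorem taut_impl_neg_of_impls {P R : Type} (S A X T Y : Form P R) :
    Taut ((S.impl (A.impl X)).impl ((T.impl (A.impl Y)).impl
      ((X.impl Y.neg).impl (A.impl (S.impl T.neg))))) := by
  intro v hneg hdisj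
  simp only [Form.impl, hdisj, hneg]
  cases v S <;> cases v A <;> cases v X <;> cases v T <;> cases v Y <;> rfl

theorem Prov.impl_neg_of_impls {P R : Type} {S A X T Y : Form P R}
    (hS : Prov (S.impl (A.impl X))) (hT : Prov (T.impl (A.impl Y)))
    (hXY : Prov (X.impl Y.neg)) : Prov (A.impl (S.impl T.neg)) :=
  Prov.mp (Prov.mp (Prov.mp (Prov.taut (taut_impl_neg_of_impls S A X T Y)) hS) hT) hXY

/-- internal consistency of accepted reasons (IC) is derivable in RBB:
⊢ Br → (r:φ → ¬(r:¬φ)). -/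
theorem rbb_internal_consistency {P R : Type} (r : R) (φ : Form P R) :
    Prov ((Form.bel (Form.adeq r)).impl
      ((Form.supports r φ).impl (Form.supports r φ.neg).neg)) :=
  Prov.impl_neg_of_impls (Prov.rb r φ) (Prov.rb r φ.neg) (Prov.d φ)
end

section
/- In the extended theory RBB_σ (with master reason σ and axioms (MA) σ→(Br→r), (MB) Bσ, (MR) r:φ→(Br→σ:φ)), reason-based beliefs are closed under implication across different source reasons: ⊢ (Bs ∧ Br ∧ s:(φ→ψ) ∧ r:φ) → Bψ. -/
/-- Derivability in the theory RBB_σ: RBB plus master-reason axioms (MA), (MB), (MR). -/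
inductive ProvS {P R : Type} (σ : R) : Form P R → Prop
  | taut {φ : Form P R} : Taut φ → ProvS σ φ
  | rk (r : R) (φ ψ : Form P R) :
      ProvS σ ((Form.supports r (φ.impl ψ)).impl ((Form.supports r φ).impl (Form.supports r ψ)))
  | a (r : R) (φ : Form P R) :
      ProvS σ ((Form.supports r φ).impl ((Form.adeq r).impl φ))
  | rb (r : R) (φ : Form P R) :
      ProvS σ ((Form.supports r φ).impl ((Form.bel (Form.adeq r)).impl (Form.bel φ)))
  | d (φ : Form P R) : ProvS σ ((Form.bel φ).impl (Form.bel φ.neg).neg)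
  | ma (r : R) :
      ProvS σ ((Form.adeq σ).impl ((Form.bel (Form.adeq r)).impl (Form.adeq r)))
  | mb : ProvS σ (Form.bel (Form.adeq σ))
  | mr (r : R) (φ : Form P R) :
      ProvS σ ((Form.supports r φ).impl ((Form.bel (Form.adeq r)).impl (Form.supports σ φ)))
  | mp {φ ψ : Form P R} : ProvS σ (φ.impl ψ) → ProvS σ φ → ProvS σ ψ
  | rn (r : R) {φ : Form P R} : ProvS σ φ → ProvS σ (Form.supports r φ)
  | e {φ ψ : Form P R} : ProvS σ (φ.iffF ψ) → ProvS σ ((Form.bel φ).iffF (Form.bel ψ))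

/-! (MR) transfers both source supports to the master reason σ, where (RK) combines them into
`σ:ψ`; (RB) for σ together with (MB) turns `σ:ψ` into `Bψ`. -/

namespace ProvS

variable {P R : Type} {σ : R}

theorem imp_self (φ : Form P R) : ProvS σ (φ.impl φ) :=
  taut fun v hn hd => by simp [Form.impl, hn, hd]

theorem imp_of (χ : Form P R) {φ : Form P R} (hφ : ProvS σ φ) : ProvS σ (χ.impl φ) :=
  (taut (φ := φ.impl (χ.impl φ)) fun v hn hd => by
    simp only [Form.impl, hn, hd]; cases v φ <;> simp).mp hφ

theorem imp_mp {χ φ ψ : Form P R} (hφψ : ProvS σ (χ.impl (φ.impl ψ))) (hφ : ProvS σ (χ.impl φ)) :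
    ProvS σ (χ.impl ψ) :=
  ((taut (φ := (χ.impl (φ.impl ψ)).impl ((χ.impl φ).impl (χ.impl ψ))) fun v hn hd => by
    simp only [Form.impl, hn, hd]; cases v χ <;> cases v φ <;> simp).mp hφψ).mp hφ

theorem imp_mp₂ {χ φ ψ θ : Form P R} (hax : ProvS σ (φ.impl (ψ.impl θ)))
    (hφ : ProvS σ (χ.impl φ)) (hψ : ProvS σ (χ.impl ψ)) : ProvS σ (χ.impl θ) :=
  imp_mp (imp_mp (imp_of χ hax) hφ) hψ

theorem imp_trans {χ φ ψ : Form P R} (hχφ : ProvS σ (χ.impl φ)) (hφψ : ProvS σ (φ.impl ψ)) :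
    ProvS σ (χ.impl ψ) :=
  imp_mp (imp_of χ hφψ) hχφ

theorem conj_imp_left (φ ψ : Form P R) : ProvS σ ((φ.conj ψ).impl φ) :=
  taut fun v hn hd => by simp only [Form.impl, Form.conj, hn, hd]; cases v φ <;> simp

theorem conj_imp_right (φ ψ : Form P R) : ProvS σ ((φ.conj ψ).impl ψ) :=
  taut fun v hn hd => by simp only [Form.impl, Form.conj, hn, hd]; cases v ψ <;> simp

theorem supports_master_imp_bel (φ : Form P R) : ProvS σ ((Form.supports σ φ).impl (Form.bel φ)) :=
  imp_mp₂ (rb σ φ) (imp_self _) (imp_of _ mb)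

end ProvS

open ProvS in
/-- in RBB_σ, reason-based beliefs are closed under implication
across different source reasons: ⊢ (Bs ∧ Br ∧ s:(φ→ψ) ∧ r:φ) → Bψ. -/
theorem rbb_sigma_cross_reason_closure {P R : Type} (σ r s : R) (φ ψ : Form P R) :
    ProvS σ (((Form.bel (Form.adeq s)).conj
        ((Form.bel (Form.adeq r)).conj
          ((Form.supports s (φ.impl ψ)).conj (Form.supports r φ)))).impl
      (Form.bel ψ)) := by
  set H := (Form.bel (Form.adeq s)).conj ((Form.bel (Form.adeq r)).conj
    ((Form.supports s (φ.impl ψ)).conj (Form.supports r φ)))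
  have hBs : ProvS σ (H.impl (Form.bel (Form.adeq s))) := conj_imp_left _ _
  have hBr : ProvS σ (H.impl (Form.bel (Form.adeq r))) :=
    imp_trans (conj_imp_right _ _) (conj_imp_left _ _)
  have hs : ProvS σ (H.impl (Form.supports s (φ.impl ψ))) :=
    imp_trans (conj_imp_right _ _) <| imp_trans (conj_imp_right _ _) (conj_imp_left _ _)
  have hr : ProvS σ (H.impl (Form.supports r φ)) :=
    imp_trans (conj_imp_right _ _) <| imp_trans (conj_imp_right _ _) (conj_imp_right _ _)
  have hσφψ := imp_mp₂ (mr s (φ.impl ψ)) hs hBs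
  have hσφ := imp_mp₂ (mr r φ) hr hBr
  exact imp_trans (imp_mp₂ (rk σ φ ψ) hσφψ hσφ) (supports_master_imp_bel ψ)
end

section
/- In RBB_σ^+, beliefs are closed under modus ponens: ⊢ B(φ→ψ) → (Bφ → Bψ). -/
/-- Derivability in the theory RBB_σ⁺: RBB_σ plus axiom (MT) Bφ → σ:φ. -/
inductive ProvSP {P R : Type} (σ : R) : Form P R → Prop
  | taut {φ : Form P R} : Taut φ → ProvSP σ φ
  | rk (r : R) (φ ψ : Form P R) :
      ProvSP σ ((Form.supports r (φ.impl ψ)).impl ((Form.supports r φ).impl (Form.supports r ψ)))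
  | a (r : R) (φ : Form P R) :
      ProvSP σ ((Form.supports r φ).impl ((Form.adeq r).impl φ))
  | rb (r : R) (φ : Form P R) :
      ProvSP σ ((Form.supports r φ).impl ((Form.bel (Form.adeq r)).impl (Form.bel φ)))
  | d (φ : Form P R) : ProvSP σ ((Form.bel φ).impl (Form.bel φ.neg).neg)
  | ma (r : R) :
      ProvSP σ ((Form.adeq σ).impl ((Form.bel (Form.adeq r)).impl (Form.adeq r)))
  | mb : ProvSP σ (Form.bel (Form.adeq σ))
  | mr (r : R) (φ : Form P R) :
      ProvSP σ ((Form.supports r φ).impl ((Form.bel (Form.adeq r)).impl (Form.supports σ φ)))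
  | mt (φ : Form P R) : ProvSP σ ((Form.bel φ).impl (Form.supports σ φ))
  | mp {φ ψ : Form P R} : ProvSP σ (φ.impl ψ) → ProvSP σ φ → ProvSP σ ψ
  | rn (r : R) {φ : Form P R} : ProvSP σ φ → ProvSP σ (Form.supports r φ)
  | e {φ ψ : Form P R} : ProvSP σ (φ.iffF ψ) → ProvSP σ ((Form.bel φ).iffF (Form.bel ψ))

/-! By (MT), `Bφ → σ:φ`; by (RB) together with (MB) `Bσ`, conversely `σ:φ → Bφ`. So belief
coincides with support by the master reason σ, which is closed under modus ponens by (RK). -/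

namespace Taut
variable {P R : Type}

theorem impl_swap (a b c : Form P R) :
    Taut ((a.impl (b.impl c)).impl (b.impl (a.impl c))) := by
  intro v hneg hdisj
  simp only [Form.impl, hdisj, hneg]
  cases v a <;> cases v b <;> cases v c <;> rfl

theorem impl_impl_congr (a a' b b' c c' : Form P R) :
    Taut ((a'.impl a).impl ((b'.impl b).impl ((c.impl c').impl
      ((a.impl (b.impl c)).impl (a'.impl (b'.impl c')))))) := by
  intro v hneg hdisj
  simp only [Form.impl, hdisj, hneg]
  cases v a <;> cases v a' <;> cases v b <;> cases v b' <;> cases v c <;> cases v c' <;> rfl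

end Taut

namespace ProvSP
variable {P R : Type} {σ : R} {a a' b b' c c' : Form P R}

theorem impl_of_impl_impl (hab : ProvSP σ (a.impl (b.impl c))) (hb : ProvSP σ b) :
    ProvSP σ (a.impl c) :=
  mp (mp (taut (Taut.impl_swap a b c)) hab) hb

theorem impl_impl_congr (ha : ProvSP σ (a'.impl a)) (hb : ProvSP σ (b'.impl b))
    (hc : ProvSP σ (c.impl c')) (h : ProvSP σ (a.impl (b.impl c))) :
    ProvSP σ (a'.impl (b'.impl c')) :=
  mp (mp (mp (mp (taut (Taut.impl_impl_congr a a' b b' c c')) ha) hb) hc) h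

theorem supports_master_impl_bel (φ : Form P R) :
    ProvSP σ ((Form.supports σ φ).impl (Form.bel φ)) :=
  impl_of_impl_impl (rb σ φ) mb

end ProvSP

/-- in RBB_σ⁺, beliefs are closed under modus ponens:
⊢ B(φ→ψ) → (Bφ → Bψ). -/
theorem rbb_sigma_plus_belief_mp_closure {P R : Type} (σ : R) (φ ψ : Form P R) :
    ProvSP σ ((Form.bel (φ.impl ψ)).impl ((Form.bel φ).impl (Form.bel ψ))) :=
  ProvSP.impl_impl_congr (ProvSP.mt _) (ProvSP.mt _) (ProvSP.supports_master_impl_bel ψ)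
    (ProvSP.rk σ φ ψ)
end

section
/- The theory RBB is sound with respect to its neighborhood semantics: every RBB-derivable formula is true at every world of every model satisfying properties (pr), (d), and (rb). -/
/-- A model for RBB: worlds, an accessibility relation for each reason, a
neighborhood function for belief, and a valuation. -/
structure Model (P R : Type) where
  W : Type
  nonempty : Nonempty W
  rel : R → W → W → Prop
  N : W → Set (Set W)
  V : W → Set P

namespace Model
variable {P R : Type}
/-- Property (d): believed propositions have unbelieved complements. -/
def PropD (M : Model P R) : Prop :=
  ∀ (w : M.W) (X : Set M.W), X ∈ M.N w → Xᶜ ∉ M.N w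
/-- Property (rb): if `r(w) ⊆ X` and `r° ∈ N(w)` then `X ∈ N(w)`. -/
def PropRB (M : Model P R) : Prop :=
  ∀ (r : R) (w : M.W) (X : Set M.W),
    (∀ v, M.rel r w v → v ∈ X) → {v | M.rel r v v} ∈ M.N w → X ∈ M.N w
end Model

/-- Satisfaction of a formula at a world of a model. -/
def sat {P R : Type} (M : Model P R) : M.W → Form P R → Prop
  | w, .atom p => p ∈ M.V w
  | w, .neg φ => ¬ sat M w φ
  | w, .disj φ ψ => sat M w φ ∨ sat M w ψ
  | w, .supports r φ => ∀ v, M.rel r w v → sat M v φ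
  | w, .adeq r => M.rel r w w
  | w, .bel φ => {v | sat M v φ} ∈ M.N w

/-!
Soundness is proved by induction on derivations. The frame conditions (rb) and (d) are exactly
the semantic content of the axioms (RB) and (D), and belief equivalence is sound because
provably equivalent formulas have the same truth set, hence the same membership in `N w`.
-/

section Semantics

variable {P R : Type} {M : Model P R} {w : M.W} {φ ψ : Form P R}

theorem sat_impl : sat M w (φ.impl ψ) ↔ (sat M w φ → sat M w ψ) := by
  simp only [Form.impl, sat]
  tauto

theorem sat_iffF : sat M w (φ.iffF ψ) ↔ (sat M w φ ↔ sat M w ψ) := by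
  simp only [Form.iffF, Form.conj, Form.impl, sat]
  tauto

/-- Truth at a world is itself a Boolean valuation respecting negation and disjunction. -/
theorem sat_of_taut (h : Taut φ) : sat M w φ := by
  classical
  refine of_decide_eq_true <| h (fun ψ => decide (sat M w ψ)) (fun ψ => ?_) (fun ψ χ => ?_)
  · exact Bool.eq_iff_iff.2 <| by
      rw [decide_eq_true_iff, Bool.not_eq_true', decide_eq_false_iff_not]; rfl
  · exact Bool.eq_iff_iff.2 <| by
      rw [decide_eq_true_iff, Bool.or_eq_true, decide_eq_true_iff, decide_eq_true_iff]; rfl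

theorem sat_rk (r : R) :
    sat M w ((Form.supports r (φ.impl ψ)).impl ((Form.supports r φ).impl (Form.supports r ψ))) := by
  simp only [sat_impl, sat]
  exact fun himp hφ v hv => himp v hv (hφ v hv)

theorem sat_a (r : R) : sat M w ((Form.supports r φ).impl ((Form.adeq r).impl φ)) := by
  simp only [sat_impl, sat]
  exact fun hφ hw => hφ w hw

theorem sat_rb (hrb : M.PropRB) (r : R) :
    sat M w ((Form.supports r φ).impl ((Form.bel (Form.adeq r)).impl (Form.bel φ))) := by
  simp only [sat_impl, sat]
  exact hrb r w _

theorem sat_d (hd : M.PropD) : sat M w ((Form.bel φ).impl (Form.bel φ.neg).neg) := by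
  simp only [sat_impl, sat]
  exact hd w _

theorem sat_bel_congr (h : ∀ v, sat M v φ ↔ sat M v ψ) :
    sat M w (Form.bel φ) ↔ sat M w (Form.bel ψ) := by
  simp only [sat, h]

end Semantics

/-- soundness of RBB. Every RBB-derivable formula is true at every
world of every model satisfying (d) and (rb) (property (pr) is automatic here
since propositional letters and reasons are distinct sorts). -/
theorem rbb_soundness {P R : Type} {φ : Form P R} (h : Prov φ) :
    ∀ M : Model P R, M.PropD → M.PropRB → ∀ w : M.W, sat M w φ := by
  intro M hd hrb
  induction h with
  | taut ht => exact fun _ => sat_of_taut ht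
  | rk r => exact fun _ => sat_rk r
  | a r => exact fun _ => sat_a r
  | rb r => exact fun _ => sat_rb hrb r
  | d => exact fun _ => sat_d hd
  | mp _ _ ihimp ih => exact fun w => sat_impl.1 (ihimp w) (ih w)
  | rn r _ ih => exact fun w v _ => ih v
  | e _ ih => exact fun _ => sat_iffF.2 (sat_bel_congr fun v => sat_iffF.1 (ih v))
end

section
/- The theory RBB is complete with respect to its neighborhood semantics: every formula valid in all models satisfying (pr), (d), and (rb) is derivable in RBB. -/
/-!
Canonical model. Worlds are maximal consistent sets, each in two copies, and `r` relates `w` to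
`v` when `v` contains every `χ` with `r:χ ∈ w`, and, if `v = w`, also `r ∈ w`. The neighbourhoods
of `w` are the truth sets of the formulas believed at `w`, together with all supersets of `r(w)`
for `Br ∈ w`, which forces (rb). The truth lemma for `B` uses (E) and (RB). Property (d) reduces,
in its only nontrivial case `r₁(w) ⊆ X`, `r₂(w) ⊆ Xᶜ`, to compactness: the union of the two
`rᵢ`-theories of `w` is inconsistent, which yields `γ` with `r₂:γ` and `r₁:¬γ` at `w`, hence
`Bγ` and `B¬γ` by (RB), against (D).
-/

namespace RBB

open Form

variable {P R : Type}

def impAll (L : List (Form P R)) (χ : Form P R) : Form P R := L.foldr impl χ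

section Valuation

variable {v : Form P R → Bool} (hn : ∀ ψ, v ψ.neg = !v ψ)
  (hd : ∀ ψ χ, v (ψ.disj χ) = (v ψ || v χ))
include hn hd

lemma val_impl (a b : Form P R) : v (a.impl b) = true ↔ (v a = true → v b = true) := by
  cases h : v a <;> simp [impl, hn, hd, h]

lemma val_impAll (L : List (Form P R)) (χ : Form P R) :
    v (impAll L χ) = true ↔ ((∀ a ∈ L, v a = true) → v χ = true) := by
  induction L with
  | nil => simp [impAll]
  | cons a L ih =>
    rw [impAll, List.foldr_cons, val_impl hn hd, ← impAll, ih]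
    simp only [List.mem_cons, forall_eq_or_imp]
    tauto

end Valuation

def Derives (Γ : Set (Form P R)) (χ : Form P R) : Prop :=
  ∃ L : List (Form P R), (∀ ψ ∈ L, ψ ∈ Γ) ∧ Prov (impAll L χ)

namespace Derives

variable {Γ Δ : Set (Form P R)} {a b χ : Form P R}

lemma of_prov (h : Prov χ) : Derives Γ χ := ⟨[], by simp, h⟩

lemma of_mem (h : χ ∈ Γ) : Derives Γ χ :=
  ⟨[χ], by simpa using h, Prov.taut fun v hn hd => by simp [val_impAll hn hd]⟩

lemma mono (hΓΔ : Γ ⊆ Δ) : Derives Γ χ → Derives Δ χ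
  | ⟨L, hL, hp⟩ => ⟨L, fun ψ hψ => hΓΔ (hL ψ hψ), hp⟩

lemma mp : Derives Γ (a.impl b) → Derives Γ a → Derives Γ b
  | ⟨L₁, hL₁, hp₁⟩, ⟨L₂, hL₂, hp₂⟩ => by
    refine ⟨L₁ ++ L₂, by simpa [or_imp, forall_and] using And.intro hL₁ hL₂, ?_⟩
    refine Prov.mp (Prov.mp (Prov.taut fun v hn hd => ?_) hp₁) hp₂
    simp only [val_impl hn hd, val_impAll hn hd, List.mem_append]
    grind

lemma imp_of_insert : Derives (insert a Γ) χ → Derives Γ (a.impl χ)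
  | ⟨L, hL, hp⟩ => by
    classical
    refine ⟨L.filter (· ≠ a), fun ψ hψ => ?_, Prov.mp (Prov.taut fun v hn hd => ?_) hp⟩
    · obtain ⟨hψL, hψa⟩ := List.mem_filter.1 hψ
      exact (hL ψ hψL).resolve_left (of_decide_eq_true hψa)
    · simp only [val_impl hn hd, val_impAll hn hd, List.mem_filter, decide_eq_true_iff]
      grind

lemma cut (hb : Derives Γ b) (h : Derives (insert b Γ) χ) : Derives Γ χ :=
  h.imp_of_insert.mp hb

lemma by_cases (h₁ : Derives (insert b Γ) χ) (h₂ : Derives (insert b.neg Γ) χ) :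
    Derives Γ χ := by
  refine ((of_prov (Prov.taut fun v hn hd => ?_)).mp h₁.imp_of_insert).mp h₂.imp_of_insert
  simp only [val_impl hn hd, hn]
  cases v b <;> simp

lemma exists_mem_imp_of_union {A B : Set (Form P R)} (hB : ∀ θ, Derives B θ → θ ∈ B)
    {χ : Form P R} (h : Derives (A ∪ B) χ) : ∃ γ ∈ B, Derives A (γ.impl χ) := by
  classical
  obtain ⟨L, hL, hp⟩ := h
  -- `γ := (L_B ⇒ χ) → χ`, for `L_B` the members of `L` outside `A`, follows from `L_B`.
  refine ⟨(impAll (L.filter (· ∉ A)) χ).impl χ, hB _ ⟨L.filter (· ∉ A), ?_, ?_⟩,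
    ⟨L.filter (· ∈ A), ?_, Prov.mp (Prov.taut fun v hn hd => ?_) hp⟩⟩
  · intro ψ hψ
    obtain ⟨hψL, hψA⟩ := List.mem_filter.1 hψ
    exact (hL ψ hψL).resolve_left (of_decide_eq_true hψA)
  · exact Prov.taut fun v hn hd => by simp +contextual [val_impl hn hd, val_impAll hn hd]
  · exact fun ψ hψ => of_decide_eq_true (List.mem_filter.1 hψ).2
  · simp only [val_impl hn hd, val_impAll hn hd, List.mem_filter, decide_eq_true_iff]
    grind

end Derives

structure IsMCS (Γ : Set (Form P R)) : Prop where
  mem_of_derives {ψ : Form P R} : Derives Γ ψ → ψ ∈ Γ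
  neg_mem_iff {ψ : Form P R} : ψ.neg ∈ Γ ↔ ψ ∉ Γ

lemma isOfFiniteCharacter_not_derives (θ : Form P R) :
    Order.IsOfFiniteCharacter {Γ : Set (Form P R) | ¬ Derives Γ θ} := by
  refine fun Γ => ⟨fun hΓ Δ hΔΓ _ hΔ => hΓ (hΔ.mono hΔΓ), fun h ⟨L, hL, hp⟩ => ?_⟩
  exact h {ψ | ψ ∈ L} hL L.finite_toSet ⟨L, fun _ => id, hp⟩

lemma exists_isMCS_of_not_derives {Γ : Set (Form P R)} {θ : Form P R} (h : ¬ Derives Γ θ) :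
    ∃ Δ, IsMCS Δ ∧ Γ ⊆ Δ ∧ θ ∉ Δ := by
  obtain ⟨Δ, hΓΔ, hmax⟩ := (isOfFiniteCharacter_not_derives θ).exists_maximal h
  have hθ : ¬ Derives Δ θ := hmax.prop
  have mem_of_derives {ψ : Form P R} (hψ : Derives Δ ψ) : ψ ∈ Δ :=
    hmax.mem_of_prop_insert fun h' => hθ (hψ.cut h')
  refine ⟨Δ, ⟨mem_of_derives, fun {ψ} => ⟨fun hneg hpos => ?_, fun hpos => ?_⟩⟩, hΓΔ,
    fun h' => hθ (.of_mem h')⟩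
  · refine hθ ⟨[ψ, ψ.neg], by simp [hpos, hneg], Prov.taut fun v hn hd => ?_⟩
    cases h : v ψ <;> simp [val_impAll hn hd, hn, h]
  · refine hmax.mem_of_prop_insert fun hneg => hθ (.by_cases ?_ hneg)
    by_contra hins
    exact hpos (hmax.mem_of_prop_insert hins)

lemma derives_of_forall_isMCS {Γ : Set (Form P R)} {θ : Form P R}
    (h : ∀ Δ, IsMCS Δ → Γ ⊆ Δ → θ ∈ Δ) : Derives Γ θ := by
  by_contra hθ
  obtain ⟨Δ, hΔ, hΓΔ, hθΔ⟩ := exists_isMCS_of_not_derives hθ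
  exact hθΔ (h Δ hΔ hΓΔ)

lemma prov_of_forall_isMCS {θ : Form P R} (h : ∀ Δ, IsMCS Δ → θ ∈ Δ) : Prov θ := by
  obtain ⟨L, hL, hp⟩ := derives_of_forall_isMCS (Γ := ∅) fun Δ hΔ _ => h Δ hΔ
  cases L with
  | nil => exact hp
  | cons a _ => exact absurd (hL a List.mem_cons_self) (Set.notMem_empty a)

namespace IsMCS

variable {Γ : Set (Form P R)} (hΓ : IsMCS Γ) {a b : Form P R}
include hΓ

lemma prov_mem (h : Prov a) : a ∈ Γ := hΓ.mem_of_derives (.of_prov h)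

lemma disj_mem_iff : a.disj b ∈ Γ ↔ a ∈ Γ ∨ b ∈ Γ := by
  refine ⟨fun h => ?_, fun h => hΓ.mem_of_derives ?_⟩
  · by_contra hab
    rw [not_or, ← hΓ.neg_mem_iff, ← hΓ.neg_mem_iff] at hab
    refine hΓ.neg_mem_iff.1 (hΓ.mem_of_derives ⟨[a.neg, b.neg], by simpa using hab, ?_⟩) h
    exact Prov.taut fun v hn hd => by simp [val_impAll hn hd, hn, hd]
  · rcases h with h | h
    · exact ⟨[a], by simpa using h,
        Prov.taut fun v hn hd => by simp +contextual [val_impAll hn hd, hd]⟩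
    · exact ⟨[b], by simpa using h,
        Prov.taut fun v hn hd => by simp +contextual [val_impAll hn hd, hd]⟩

lemma impl_mem_iff : a.impl b ∈ Γ ↔ (a ∈ Γ → b ∈ Γ) := by
  rw [impl, hΓ.disj_mem_iff, hΓ.neg_mem_iff, imp_iff_not_or]

lemma conj_mem_iff : a.conj b ∈ Γ ↔ a ∈ Γ ∧ b ∈ Γ := by
  rw [conj, hΓ.neg_mem_iff, hΓ.disj_mem_iff, hΓ.neg_mem_iff, hΓ.neg_mem_iff]
  tauto

lemma iffF_mem_iff : a.iffF b ∈ Γ ↔ (a ∈ Γ ↔ b ∈ Γ) := by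
  rw [iffF, hΓ.conj_mem_iff, hΓ.impl_mem_iff, hΓ.impl_mem_iff, ← iff_iff_implies_and_implies]

lemma bel_mem_of_prov_iffF (h : Prov (a.iffF b)) (ha : bel a ∈ Γ) : bel b ∈ Γ :=
  (hΓ.iffF_mem_iff.1 (hΓ.prov_mem (Prov.e h))).1 ha

lemma bel_neg_notMem (h : bel a ∈ Γ) : bel a.neg ∉ Γ :=
  hΓ.neg_mem_iff.1 (hΓ.impl_mem_iff.1 (hΓ.prov_mem (Prov.d a)) h)

lemma supports_mem_of_derives (r : R) (h : Derives {χ | supports r χ ∈ Γ} a) :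
    supports r a ∈ Γ := by
  obtain ⟨L, hL, hp⟩ := h
  suffices ∀ θ, supports r (impAll L θ) ∈ Γ → supports r θ ∈ Γ from
    this a (hΓ.prov_mem (Prov.rn r hp))
  clear hp
  induction L with
  | nil => exact fun _ => id
  | cons b L ih =>
    intro θ h
    have hb : supports r b ∈ Γ := hL b List.mem_cons_self
    refine ih (fun ψ hψ => hL ψ (List.mem_cons_of_mem b hψ)) θ ?_
    exact hΓ.impl_mem_iff.1 (hΓ.impl_mem_iff.1 (hΓ.prov_mem (Prov.rk r b _)) h) hb

end IsMCS

/-- The tag lets every world `w` see an `r`-successor with any given theory other than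
`w` itself, so reflexive `r`-steps can be governed by the formula `adeq r` alone. -/
abbrev World (P R : Type) : Type := {Γ : Set (Form P R) // IsMCS Γ} × Bool

namespace World

def theory (w : World P R) : Set (Form P R) := w.1.1

lemma isMCS (w : World P R) : IsMCS w.theory := w.1.2

def twin (w : World P R) (Δ : {Γ : Set (Form P R) // IsMCS Γ}) : World P R := (Δ, !w.2)

lemma ne_twin (w : World P R) (Δ : {Γ : Set (Form P R) // IsMCS Γ}) : w ≠ w.twin Δ := by
  intro h
  simpa [twin] using congrArg Prod.snd h

end World

def proofSet (ψ : Form P R) : Set (World P R) := {w | ψ ∈ w.theory}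

lemma proofSet_neg (ψ : Form P R) : proofSet ψ.neg = (proofSet ψ)ᶜ :=
  Set.ext fun w => w.isMCS.neg_mem_iff

lemma prov_iffF_of_proofSet_eq {a b : Form P R} (h : proofSet a = proofSet b) :
    Prov (a.iffF b) :=
  prov_of_forall_isMCS fun Δ hΔ => hΔ.iffF_mem_iff.2 (Set.ext_iff.1 h (⟨Δ, hΔ⟩, true))

def canRel (r : R) (w v : World P R) : Prop :=
  (∀ χ, supports r χ ∈ w.theory → χ ∈ v.theory) ∧ (w = v → adeq r ∈ w.theory)

def canN (w : World P R) : Set (Set (World P R)) :=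
  {X | (∃ ψ, bel ψ ∈ w.theory ∧ X = proofSet ψ) ∨
    ∃ r, bel (adeq r) ∈ w.theory ∧ ∀ v, canRel r w v → v ∈ X}

def canModel (hW : Nonempty (World P R)) : Model P R where
  W := World P R
  nonempty := hW
  rel := canRel
  N := canN
  V w := {p | atom p ∈ w.theory}

variable {r : R} {w : World P R} {θ : Form P R}

lemma canRel_self_iff : canRel r w w ↔ adeq r ∈ w.theory := by
  refine ⟨fun h => h.2 rfl, fun h => ⟨fun χ hχ => ?_, fun _ => h⟩⟩
  exact w.isMCS.impl_mem_iff.1 (w.isMCS.impl_mem_iff.1 (w.isMCS.prov_mem (Prov.a r χ)) hχ) h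

lemma canRel_twin {Δ : {Γ : Set (Form P R) // IsMCS Γ}}
    (h : ∀ χ, supports r χ ∈ w.theory → χ ∈ Δ.1) : canRel r w (w.twin Δ) :=
  ⟨h, fun h' => absurd h' (w.ne_twin Δ)⟩

lemma supports_mem_of_forall_canRel (h : ∀ v, canRel r w v → θ ∈ v.theory) :
    supports r θ ∈ w.theory :=
  w.isMCS.supports_mem_of_derives r <| derives_of_forall_isMCS fun Δ hΔ hsub =>
    h (w.twin ⟨Δ, hΔ⟩) (canRel_twin hsub)

lemma bel_mem_of_forall_canRel (hr : bel (adeq r) ∈ w.theory)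
    (h : ∀ v, canRel r w v → θ ∈ v.theory) : bel θ ∈ w.theory :=
  w.isMCS.impl_mem_iff.1 (w.isMCS.impl_mem_iff.1 (w.isMCS.prov_mem (Prov.rb r θ))
    (supports_mem_of_forall_canRel h)) hr

lemma bel_mem_of_proofSet_mem_canN (h : proofSet θ ∈ canN w) : bel θ ∈ w.theory := by
  obtain ⟨ψ, hψ, heq⟩ | ⟨r, hr, hsub⟩ := h
  · exact w.isMCS.bel_mem_of_prov_iffF (prov_iffF_of_proofSet_eq heq.symm) hψ
  · exact bel_mem_of_forall_canRel hr hsub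

lemma compl_proofSet_notMem_canN (h : proofSet θ ∈ canN w) : (proofSet θ)ᶜ ∉ canN w := by
  rw [← proofSet_neg]
  exact fun h' => w.isMCS.bel_neg_notMem (bel_mem_of_proofSet_mem_canN h)
    (bel_mem_of_proofSet_mem_canN h')

lemma exists_canRel_canRel {r₁ r₂ : R} (h₁ : bel (adeq r₁) ∈ w.theory)
    (h₂ : bel (adeq r₂) ∈ w.theory) : ∃ v, canRel r₁ w v ∧ canRel r₂ w v := by
  by_contra hcon
  push Not at hcon
  -- `¬t` plays the role of falsum, which the language lacks.
  let t : Form P R := (adeq r₁).impl (adeq r₁)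
  have ht : Prov t := Prov.taut fun v hn hd => by simp [t, val_impl hn hd]
  have hincons : Derives ({χ | supports r₁ χ ∈ w.theory} ∪ {χ | supports r₂ χ ∈ w.theory})
      t.neg := derives_of_forall_isMCS fun Δ hΔ hsub =>
    absurd (canRel_twin fun χ hχ => hsub (.inr hχ))
      (hcon (w.twin ⟨Δ, hΔ⟩) (canRel_twin fun χ hχ => hsub (.inl hχ)))
  obtain ⟨γ, hγ, hγt⟩ :=
    hincons.exists_mem_imp_of_union fun _ => w.isMCS.supports_mem_of_derives r₂
  replace hγt : supports r₁ (γ.impl t.neg) ∈ w.theory := w.isMCS.supports_mem_of_derives r₁ hγt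
  refine w.isMCS.bel_neg_notMem (bel_mem_of_forall_canRel h₂ fun v hv => hv.1 γ hγ)
    (bel_mem_of_forall_canRel h₁ fun v hv => v.isMCS.neg_mem_iff.2 fun hγv => ?_)
  exact v.isMCS.neg_mem_iff.1 (v.isMCS.impl_mem_iff.1 (hv.1 _ hγt) hγv) (v.isMCS.prov_mem ht)

variable (hW : Nonempty (World P R))

lemma canModel_propD : (canModel hW).PropD := by
  intro w X hX hXc
  obtain ⟨ψ, -, rfl⟩ | ⟨r₁, h₁, hsub₁⟩ := id hX
  · exact compl_proofSet_notMem_canN hX hXc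
  obtain ⟨ψ, -, hψ⟩ | ⟨r₂, h₂, hsub₂⟩ := id hXc
  · rw [← compl_compl X, hψ] at hX
    exact compl_proofSet_notMem_canN (hψ ▸ hXc) hX
  · obtain ⟨v, hv₁, hv₂⟩ := exists_canRel_canRel h₁ h₂
    exact hsub₂ v hv₂ (hsub₁ v hv₁)

lemma canModel_propRB : (canModel hW).PropRB := by
  intro r w X hsub hN
  have hself : {v : World P R | canRel r v v} = proofSet (adeq r) :=
    Set.ext fun _ => canRel_self_iff
  exact .inr ⟨r, bel_mem_of_proofSet_mem_canN (hself ▸ hN), hsub⟩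

lemma sat_canModel_iff (ψ : Form P R) (w : World P R) :
    sat (canModel hW) w ψ ↔ ψ ∈ w.theory := by
  induction ψ generalizing w with
  | atom p => exact Iff.rfl
  | neg a ih => exact (ih w).not.trans w.isMCS.neg_mem_iff.symm
  | disj a b iha ihb => exact (or_congr (iha w) (ihb w)).trans w.isMCS.disj_mem_iff.symm
  | supports r a ih =>
    exact ⟨fun h => supports_mem_of_forall_canRel fun v hv => (ih v).1 (h v hv),
      fun h v hv => (ih v).2 (hv.1 a h)⟩
  | adeq r => exact canRel_self_iff
  | bel a ih =>
    have hset : {v | sat (canModel hW) v a} = proofSet a := Set.ext ih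
    change {v | sat (canModel hW) v a} ∈ canN w ↔ _
    rw [hset]
    exact ⟨bel_mem_of_proofSet_mem_canN, fun h => .inl ⟨a, h, rfl⟩⟩

end RBB

/-- completeness of RBB. Every formula valid in all models
satisfying (d) and (rb) (property (pr) is automatic here since propositional
letters and reasons are distinct sorts) is derivable in RBB. -/
theorem rbb_completeness {P R : Type} (φ : Form P R)
    (h : ∀ M : Model P R, M.PropD → M.PropRB → ∀ w : M.W, sat M w φ) :
    Prov φ := by
  refine RBB.prov_of_forall_isMCS fun Δ hΔ => ?_
  let w : RBB.World P R := (⟨Δ, hΔ⟩, true)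
  exact (RBB.sat_canModel_iff ⟨w⟩ φ w).1
    (h _ (RBB.canModel_propD ⟨w⟩) (RBB.canModel_propRB ⟨w⟩) w)
end

section
/- In RBB, if Γ is a maximal consistent set with Br ∈ Γ, then the set Γ^r = {φ | r:φ ∈ Γ} of r-supported formulas is consistent. -/
/-- A fixed tautology ⊤ and a fixed contradiction ⊥. -/
def topF {P R : Type} [Inhabited R] : Form P R :=
  (Form.adeq default).impl (Form.adeq default)

def botF {P R : Type} [Inhabited R] : Form P R := Form.neg topF

/-- A set of formulas is consistent iff no finite subset (as a list) provably
implies ⊥. -/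
def Consistent {P R : Type} [Inhabited R] (Γ : Set (Form P R)) : Prop :=
  ∀ L : List (Form P R), (∀ φ ∈ L, φ ∈ Γ) →
    ¬ Prov ((L.foldr Form.conj topF).impl botF)

/-- Maximal consistent: consistent, and adding any absent formula yields
inconsistency. -/
def MaxConsistent {P R : Type} [Inhabited R] (Γ : Set (Form P R)) : Prop :=
  Consistent Γ ∧ ∀ φ : Form P R, φ ∉ Γ → ¬ Consistent (insert φ Γ)

/-!
If `φ₁, …, φₙ` are `r`-supported and jointly refute themselves, then necessitation and (RK)
push the refutation under `r:`, so `Γ` proves `r:⊥` and hence `r:¬r`. With `Br ∈ Γ`, axiom (RB)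
yields `B¬r`, which contradicts `Br` by (D).
-/

theorem taut_topF {P R : Type} [Inhabited R] : Taut (topF : Form P R) := fun v hn hd => by
  simp only [topF, Form.impl, hn, hd]
  cases v (Form.adeq (default : R)) <;> rfl

namespace Prov

variable {P R : Type}

theorem mp₂ {φ ψ χ : Form P R} (t : Taut (φ.impl (ψ.impl χ))) (hφ : Prov φ) (hψ : Prov ψ) :
    Prov χ :=
  mp (mp (taut t) hφ) hψ

theorem imp_intro {φ ψ : Form P R} (h : Prov ψ) : Prov (φ.impl ψ) :=
  mp (taut fun v hn hd => by
    simp only [Form.impl, hn, hd]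
    cases v ψ <;> cases v φ <;> rfl) h

theorem imp_trans {φ ψ χ : Form P R} (h₁ : Prov (φ.impl ψ)) (h₂ : Prov (ψ.impl χ)) :
    Prov (φ.impl χ) :=
  mp₂ (fun v hn hd => by
    simp only [Form.impl, hn, hd]
    cases v φ <;> cases v ψ <;> cases v χ <;> rfl) h₁ h₂

theorem conj_imp_of_imp_imp {φ ψ χ θ : Form P R} (h : Prov (φ.impl (ψ.impl χ)))
    (hθ : Prov (θ.impl ψ)) : Prov ((φ.conj θ).impl χ) :=
  mp₂ (fun v hn hd => by
    simp only [Form.impl, Form.conj, hn, hd]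
    cases v φ <;> cases v ψ <;> cases v χ <;> cases v θ <;> rfl) h hθ

theorem supports_mono (r : R) {φ ψ : Form P R} (h : Prov (φ.impl ψ)) :
    Prov ((Form.supports r φ).impl (Form.supports r ψ)) :=
  mp (rk r φ ψ) (rn r h)

variable [Inhabited R]

theorem supports_foldr_conj (r : R) : ∀ L : List (Form P R),
    Prov (((L.map (Form.supports r)).foldr Form.conj topF).impl
      (Form.supports r (L.foldr Form.conj topF)))
  | [] => imp_intro (rn r (taut taut_topF))
  | φ :: L => by
      let ψ := L.foldr Form.conj topF
      have pair : Prov ((Form.supports r φ).impl (Form.supports r (ψ.impl (φ.conj ψ)))) :=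
        supports_mono r (taut fun v hn hd => by
          simp only [Form.impl, Form.conj, hn, hd]
          cases v φ <;> cases v ψ <;> rfl)
      exact conj_imp_of_imp_imp (imp_trans pair (rk r ψ (φ.conj ψ))) (supports_foldr_conj r L)

theorem bel_adeq_imp_not_supports_bot (r : R) :
    Prov ((Form.bel (Form.adeq r)).impl ((Form.supports r (botF : Form P R)).impl botF)) := by
  let ρ : Form P R := Form.adeq r
  have exFalso : Prov ((Form.supports r botF).impl (Form.supports r ρ.neg)) :=
    supports_mono r (taut fun v hn hd => by
      simp only [Form.impl, botF, topF, hn, hd]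
      cases v (Form.adeq (default : R)) <;> cases v ρ.neg <;> rfl)
  have belNeg : Prov ((Form.supports r botF).impl ((Form.bel ρ).impl (Form.bel ρ.neg))) :=
    imp_trans exFalso (rb r ρ.neg)
  exact mp₂ (fun v hn hd => by
      simp only [Form.impl, hn, hd]
      cases v (Form.supports r botF) <;> cases v (Form.bel ρ) <;> cases v (Form.bel ρ.neg) <;>
        cases v botF <;> rfl)
    belNeg (d ρ)

end Prov

theorem Consistent.supported_of_bel_adeq_mem {P R : Type} [Inhabited R] {Γ : Set (Form P R)}
    {r : R} (hΓ : Consistent Γ) (hBr : Form.bel (Form.adeq r) ∈ Γ) :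
    Consistent {φ : Form P R | Form.supports r φ ∈ Γ} := by
  intro L hL hL_bot
  refine hΓ (Form.bel (Form.adeq r) :: L.map (Form.supports r)) ?_ ?_
  · simpa [List.forall_mem_cons] using ⟨hBr, hL⟩
  · have supports_bot : Prov (((L.map (Form.supports r)).foldr Form.conj topF).impl
        (Form.supports r botF)) :=
      Prov.imp_trans (Prov.supports_foldr_conj r L) (Prov.supports_mono r hL_bot)
    exact Prov.conj_imp_of_imp_imp (Prov.bel_adeq_imp_not_supports_bot r) supports_bot

/-- if Γ is maximal consistent and Br ∈ Γ, then
Γ^r = {φ | r:φ ∈ Γ} is consistent. -/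
theorem rbb_supported_set_consistent {P R : Type} [Inhabited R]
    (Γ : Set (Form P R)) (r : R) (hΓ : MaxConsistent Γ)
    (hBr : Form.bel (Form.adeq r) ∈ Γ) :
    Consistent {φ : Form P R | Form.supports r φ ∈ Γ} :=
  hΓ.1.supported_of_bel_adeq_mem hBr
end
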